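/- arXiv:1401.0134 — 2 statements merged into one kernel-verified Lean document; each statement's English description precedes it below -/
import Mathlib

section
/- Let A be an n×n copositive matrix and let u be a minimal zero of A with support I = Supp(u). Then for every proper subset J of I, the principal submatrix A_J is positive definite. -/
open Matrix

/-- A symmetric matrix `A` is copositive if `xᵀ A x ≥ 0` for all entrywise nonnegative `x`. -/
def Copositive {n : ℕ} (A : Matrix (Fin n) (Fin n) ℝ) : Prop :=
  A.IsSymm ∧ ∀ x : Fin n → ℝ, (∀ i, 0 ≤ x i) → 0 ≤ x ⬝ᵥ A.mulVec x

/-- The support of a vector. -/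
def Supp {ι : Type*} (u : ι → ℝ) : Set ι := {i | u i ≠ 0}

/-- A zero of a copositive matrix: a nonzero nonnegative vector `u` with `uᵀ A u = 0`. -/
def IsZeroOf {n : ℕ} (A : Matrix (Fin n) (Fin n) ℝ) (u : Fin n → ℝ) : Prop :=
  u ≠ 0 ∧ (∀ i, 0 ≤ u i) ∧ u ⬝ᵥ A.mulVec u = 0

/-- A minimal zero: a zero such that no zero has support strictly contained in its support. -/
def IsMinimalZeroOf {n : ℕ} (A : Matrix (Fin n) (Fin n) ℝ) (u : Fin n → ℝ) : Prop :=
  IsZeroOf A u ∧ ¬ ∃ v, IsZeroOf A v ∧ Supp v ⊂ Supp u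

/-- The principal submatrix of `A` with rows and columns in `I`. -/
def subMat {n : ℕ} (A : Matrix (Fin n) (Fin n) ℝ) (I : Finset (Fin n)) :
    Matrix {i // i ∈ I} {i // i ∈ I} ℝ :=
  A.submatrix Subtype.val Subtype.val

/-- The subvector of `u` with indices in `I`. -/
def subVec {n : ℕ} (u : Fin n → ℝ) (I : Finset (Fin n)) : {i // i ∈ I} → ℝ :=
  fun i => u i.val

/-- Irreducibility of a copositive matrix `A` with respect to a set `M` of matrices. -/
def IrreducibleWrtSet {n : ℕ} (A : Matrix (Fin n) (Fin n) ℝ)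
    (M : Set (Matrix (Fin n) (Fin n) ℝ)) : Prop :=
  ¬ ∃ γ : ℝ, 0 < γ ∧ ∃ B ∈ M, B ≠ 0 ∧ Copositive (A - γ • B)

/-- Irreducibility of a copositive matrix `A` with respect to a single matrix `M`. -/
def IrreducibleWrtMat {n : ℕ} (A M : Matrix (Fin n) (Fin n) ℝ) : Prop :=
  ¬ ∃ γ : ℝ, 0 < γ ∧ Copositive (A - γ • M)

/-- An extremal element of a cone `K` of vectors. -/
def IsExtremalIn {ι : Type*} (K : Set (ι → ℝ)) (u : ι → ℝ) : Prop :=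
  u ∈ K ∧ u ≠ 0 ∧ ∀ v w, v ∈ K → w ∈ K → u = v + w →
    (∃ a : ℝ, 0 ≤ a ∧ v = a • u) ∧ (∃ b : ℝ, 0 ≤ b ∧ w = b • u)

/-- The matrix with entries 1 at positions `(i,j)` and `(j,i)` and 0 elsewhere. -/
def Eij {n : ℕ} (i j : Fin n) : Matrix (Fin n) (Fin n) ℝ :=
  fun a b => if (a = i ∧ b = j) ∨ (a = j ∧ b = i) then 1 else 0


/-!
If `u` is a zero of the copositive matrix `A` and `Supp y ⊆ Supp u`, then `u + t • y` stays
nonnegative for small `|t|`, so `t ↦ 2 t yᵀAu + t² yᵀAy` has a local minimum at `0`: hence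
`yᵀAu = 0` and `yᵀAy ≥ 0`, i.e. `A_I` is positive semidefinite. If `yᵀAy = 0` for a nonzero `y`
supported in `J ⊊ I`, we may assume (replacing `y` by `-y`) that `y` has a negative entry. Moving
from `u` along `y` until the first coordinate vanishes then yields a zero of `A` whose support is
strictly contained in `I`, contradicting minimality.
-/

open Matrix Function Filter Topology

@[simp] theorem mem_Supp {ι : Type*} {u : ι → ℝ} {i : ι} : i ∈ Supp u ↔ u i ≠ 0 := Iff.rfl

section ExtendByZero

variable {m n R : Type*} [Fintype m] [Fintype n] [CommSemiring R] {e : m → n}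

theorem Function.Injective.extend_zero_dotProduct (he : Injective e) (x : m → R) (w : n → R) :
    extend e x 0 ⬝ᵥ w = x ⬝ᵥ (w ∘ e) := by
  refine (Fintype.sum_of_injective e he _ _ (fun i hi => ?_) fun i => ?_).symm
  · rw [extend_apply' _ _ _ (by simpa using hi), Pi.zero_apply, zero_mul]
  · rw [comp_apply, he.extend_apply]

theorem Function.Injective.dotProduct_submatrix_mulVec (he : Injective e) (A : Matrix n n R)
    (x : m → R) : x ⬝ᵥ A.submatrix e e *ᵥ x = extend e x 0 ⬝ᵥ A *ᵥ extend e x 0 := by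
  have : A.submatrix e e *ᵥ x = (A *ᵥ extend e x 0) ∘ e := by
    ext i
    change (fun j => A (e i) (e j)) ⬝ᵥ x = (fun k => A (e i) k) ⬝ᵥ extend e x 0
    rw [dotProduct_comm _ (extend e x 0), he.extend_zero_dotProduct, dotProduct_comm]
    rfl
  rw [this, he.extend_zero_dotProduct]

end ExtendByZero

theorem Matrix.IsSymm.dotProduct_mulVec_add_smul {n R : Type*} [Fintype n] [CommRing R]
    {A : Matrix n n R} (hA : A.IsSymm) (u y : n → R) (t : R) :
    (u + t • y) ⬝ᵥ A *ᵥ (u + t • y) =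
      u ⬝ᵥ A *ᵥ u + 2 * (y ⬝ᵥ A *ᵥ u) * t + (y ⬝ᵥ A *ᵥ y) * t ^ 2 := by
  have hsymm : u ⬝ᵥ A *ᵥ y = y ⬝ᵥ A *ᵥ u := by
    rw [dotProduct_mulVec, ← mulVec_transpose, hA.eq, dotProduct_comm]
  simp only [mulVec_add, mulVec_smul, add_dotProduct, dotProduct_add, smul_dotProduct,
    dotProduct_smul, hsymm, smul_eq_mul]
  ring

theorem eq_zero_and_nonneg_of_eventually_nonneg {b c : ℝ}
    (h : ∀ᶠ t in 𝓝 0, 0 ≤ b * t + c * t ^ 2) : b = 0 ∧ 0 ≤ c := by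
  have hmin : IsLocalMin (fun t => b * t + c * t ^ 2) 0 := by
    simpa [IsLocalMin, IsMinFilter] using h
  have hderiv : HasDerivAt (fun t => b * t + c * t ^ 2) b 0 := by
    simpa using ((hasDerivAt_id' 0).const_mul b).fun_add ((hasDerivAt_pow 2 0).const_mul c)
  obtain rfl := hmin.hasDerivAt_eq_zero hderiv
  obtain ⟨t, ht, ht0⟩ := ((h.filter_mono nhdsWithin_le_nhds).and self_mem_nhdsWithin).exists
    (f := 𝓝[≠] (0 : ℝ))
  have ht0 : t ≠ 0 := ht0
  exact ⟨rfl, nonneg_of_mul_nonneg_left (by simpa using ht) (by positivity)⟩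

theorem eventually_nonneg_add_smul {ι : Type*} [Finite ι] {u y : ι → ℝ} (hu : ∀ i, 0 ≤ u i)
    (hy : Supp y ⊆ Supp u) : ∀ᶠ t in 𝓝 (0 : ℝ), ∀ i, 0 ≤ (u + t • y) i := by
  refine eventually_all.2 fun i => ?_
  rcases (hu i).eq_or_lt with hui | hui
  · have hyi : y i = 0 := by simpa using mt (@hy i) (by simp [hui])
    exact Eventually.of_forall fun t => by simp [← hui, hyi]
  · have hcont : Continuous fun t : ℝ => (u + t • y) i := by fun_prop
    exact (hcont.tendsto' 0 (u i) (by simp)).eventually_const_le hui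

theorem exists_add_smul_nonneg_and_eq_zero {ι : Type*} [Fintype ι] {u y : ι → ℝ}
    (hu : ∀ i, 0 ≤ u i) (hneg : ∃ i, y i < 0) :
    ∃ t : ℝ, (∀ i, 0 ≤ (u + t • y) i) ∧ ∃ i ∈ Supp y, (u + t • y) i = 0 := by
  classical
  obtain ⟨i₀, hi₀⟩ := hneg
  -- the step `t` is the largest one keeping `u + t • y` nonnegative
  obtain ⟨j, hj, hmin⟩ := Finset.exists_min_image {i | y i < 0} (fun i => u i / -y i)
    ⟨i₀, by simpa using hi₀⟩
  rw [Finset.mem_filter_univ] at hj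
  refine ⟨u j / -y j, fun i => ?_, j, hj.ne, ?_⟩
  · rcases le_or_gt 0 (y i) with hyi | hyi
    · exact add_nonneg (hu i) (mul_nonneg (div_nonneg (hu j) (by linarith)) hyi)
    · have := hmin i (by simpa using hyi)
      rw [le_div_iff₀ (by linarith)] at this
      simp only [Pi.add_apply, Pi.smul_apply, smul_eq_mul]
      linarith
  · have hyj : y j ≠ 0 := hj.ne
    simp only [Pi.add_apply, Pi.smul_apply, smul_eq_mul]
    field_simp
    ring

section Copositive

variable {n : ℕ} {A : Matrix (Fin n) (Fin n) ℝ} {u : Fin n → ℝ}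

theorem IsZeroOf.dotProduct_mulVec_eq_zero_and_nonneg (hA : Copositive A) (hu : IsZeroOf A u)
    {y : Fin n → ℝ} (hy : Supp y ⊆ Supp u) : y ⬝ᵥ A *ᵥ u = 0 ∧ 0 ≤ y ⬝ᵥ A *ᵥ y := by
  have key := eq_zero_and_nonneg_of_eventually_nonneg (b := 2 * (y ⬝ᵥ A *ᵥ u)) <|
    (eventually_nonneg_add_smul hu.2.1 hy).mono fun t ht => by
      simpa [hA.1.dotProduct_mulVec_add_smul, hu.2.2] using hA.2 _ ht
  exact ⟨by simpa using key.1, key.2⟩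

theorem IsMinimalZeroOf.dotProduct_mulVec_self_ne_zero (hA : Copositive A)
    (hu : IsMinimalZeroOf A u) {y : Fin n → ℝ} (hy0 : y ≠ 0) (hy : Supp y ⊂ Supp u) :
    y ⬝ᵥ A *ᵥ y ≠ 0 := by
  wlog hneg : ∃ i, y i < 0 generalizing y
  · obtain ⟨i, hi⟩ := Function.ne_iff.1 hy0
    have hSupp : Supp (-y) = Supp y := by ext; simp
    simpa [mulVec_neg] using this (neg_ne_zero.2 hy0) (hSupp ▸ hy)
      ⟨i, by simpa using (not_lt.1 (not_exists.1 hneg i)).lt_of_ne' hi⟩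
  intro hq
  obtain ⟨t, hnn, j, hj, hvj⟩ := exists_add_smul_nonneg_and_eq_zero hu.1.2.1 hneg
  obtain ⟨k, hku, hky⟩ := Set.exists_of_ssubset hy
  have hyu : y ⬝ᵥ A *ᵥ u = 0 := (hu.1.dotProduct_mulVec_eq_zero_and_nonneg hA hy.1).1
  refine hu.2 ⟨u + t • y, ⟨fun h => hku ?_, hnn, ?_⟩, ?_, fun h => h (hy.1 hj) hvj⟩
  · simpa [show y k = 0 by simpa using hky] using congrFun h k
  · rw [hA.1.dotProduct_mulVec_add_smul, hu.1.2.2, hyu, hq]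
    ring
  · intro i hi
    by_contra hui
    have hyi : y i = 0 := by simpa using mt (@hy.1 i) hui
    exact hui (by simpa [hyi] using hi)

end Copositive

theorem stmt8 {n : ℕ} (A : Matrix (Fin n) (Fin n) ℝ) (hA : Copositive A)
    (u : Fin n → ℝ) (hu : IsMinimalZeroOf A u)
    (I : Finset (Fin n)) (hI : (I : Set (Fin n)) = Supp u)
    (J : Finset (Fin n)) (hJ : J ⊂ I) :
    (subMat A J).PosDef := by
  rw [posDef_iff_dotProduct_mulVec]
  refine ⟨isHermitian_iff_isSymm.2 (hA.1.submatrix _), fun x hx => ?_⟩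
  set y := extend Subtype.val x 0 with hy_def
  have hyJ : Supp y ⊆ J := fun i hi => by
    by_contra hiJ
    exact hi (extend_apply' _ _ _ fun ⟨j, hj⟩ => hiJ (hj ▸ j.2))
  have hy : Supp y ⊂ Supp u := hI ▸ hyJ.trans_ssubset (Finset.coe_ssubset.2 hJ)
  have hy0 : y ≠ 0 := fun h => hx <| funext fun j => by
    simpa [hy_def, Subtype.val_injective.extend_apply] using congrFun h j
  rw [star_trivial, subMat, Subtype.val_injective.dotProduct_submatrix_mulVec]
  exact ((hu.1.dotProduct_mulVec_eq_zero_and_nonneg hA hy.1).2).lt_of_ne'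
    (hu.dotProduct_mulVec_self_ne_zero hA hy0 hy)
end

section
/- Let A be an n×n copositive matrix. Then A is irreducible with respect to the cone N_n of symmetric entry-wise nonnegative n×n matrices if and only if for every pair of indices i, j ∈ {1,…,n} there exists a minimal zero u of A such that (Au)_i = (Au)_j = 0 and u_i + u_j > 0. -/
open Matrix

/-!
If `A - γ • B` is copositive with `B ≥ 0` and `B i j > 0`, take the zero `u` given for `(i, j)`,
say with `u i > 0`. Since `(A u)_j = 0`, along `u + t e_j` the form of `A - γ • B` is at most
`t² A_jj - γ t u_i B_ij`, negative for small `t > 0`.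

Conversely, irreducibility with respect to `Eij i j` says that `A - γ • Eij i j` fails to be
copositive for every `γ > 0`. Minimising its form over a simplex for `γ = γ_k → 0` gives points
`x_k` with `(A x_k)_l < γ_k` on their supports, and a limit `u` is a zero with
`(A u)_i = (A u)_j = 0`. If `u_i = u_j = 0`, then `x_k` is eventually supported where `A u`
vanishes, so subtracting a multiple of `u` from `x_k` removes a coordinate and changes neither
form: the failure persists on a smaller support. On a minimal support this forces
`u_i + u_j > 0`. Finally, among such zeros one of minimal support is a minimal zero: a zero `v`
of smaller support also has `(A v)_i = (A v)_j = 0`, and `v` or `u - t • v` inherits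
`u_i + u_j > 0`.
-/

open Filter Topology

lemma nonneg_of_forall_mul_add_mul_sq_nonneg {a b δ : ℝ} (hδ : 0 < δ)
    (h : ∀ t, 0 < t → t ≤ δ → 0 ≤ a * t + b * t ^ 2) : 0 ≤ a := by
  by_contra! ha
  set t := min δ (-a / (|b| + 1))
  have ht : 0 < t := lt_min hδ (div_pos (neg_pos.2 ha) (by positivity))
  have hbt : t * (|b| + 1) ≤ -a := (le_div_iff₀ (by positivity)).1 (min_le_right _ _)
  nlinarith [h t ht (min_le_left _ _), mul_le_mul_of_nonneg_left (le_abs_self b) (sq_nonneg t)]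

section QuadraticForm

variable {ι : Type*} [Fintype ι] {A B : Matrix ι ι ℝ} {x u w : ι → ℝ}

lemma dotProduct_eq_zero_of_forall_ne_zero (h : ∀ l, x l ≠ 0 → w l = 0) : x ⬝ᵥ w = 0 :=
  Finset.sum_eq_zero fun l _ => by
    by_cases hl : x l = 0
    · simp [hl]
    · simp [h l hl]

lemma Matrix.IsSymm.dotProduct_mulVec_comm (hA : A.IsSymm) (x y : ι → ℝ) :
    x ⬝ᵥ A *ᵥ y = y ⬝ᵥ A *ᵥ x := by
  rw [dotProduct_mulVec, ← mulVec_transpose, hA.eq, dotProduct_comm]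

lemma Matrix.IsSymm.quad_add_smul (hA : A.IsSymm) (x y : ι → ℝ) (t : ℝ) :
    (x + t • y) ⬝ᵥ A *ᵥ (x + t • y) =
      x ⬝ᵥ A *ᵥ x + 2 * t * (x ⬝ᵥ A *ᵥ y) + t ^ 2 * (y ⬝ᵥ A *ᵥ y) := by
  simp only [mulVec_add, mulVec_smul, dotProduct_add, add_dotProduct, dotProduct_smul,
    smul_dotProduct, smul_eq_mul, hA.dotProduct_mulVec_comm y x]
  ring

lemma Matrix.IsSymm.quad_add_single [DecidableEq ι] (hA : A.IsSymm) (x : ι → ℝ) (l : ι) (t : ℝ) :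
    (x + Pi.single l t) ⬝ᵥ A *ᵥ (x + Pi.single l t) =
      x ⬝ᵥ A *ᵥ x + 2 * t * (A *ᵥ x) l + t ^ 2 * A l l := by
  have hsingle : (Pi.single l t : ι → ℝ) = t • Pi.single l 1 := by
    rw [← Pi.single_smul, smul_eq_mul, mul_one]
  rw [hsingle, hA.quad_add_smul, hA.dotProduct_mulVec_comm x (Pi.single l 1),
    single_one_dotProduct, single_one_dotProduct, mulVec_single_one]
  rfl

lemma Matrix.IsSymm.quad_sub_smul_of_dotProduct_eq_zero (hA : A.IsSymm)
    (hxu : x ⬝ᵥ A *ᵥ u = 0) (hu : u ⬝ᵥ A *ᵥ u = 0) (t : ℝ) :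
    (x - t • u) ⬝ᵥ A *ᵥ (x - t • u) = x ⬝ᵥ A *ᵥ x := by
  rw [sub_eq_add_neg, ← neg_smul, hA.quad_add_smul, hxu, hu]
  ring

lemma quad_smul (A : Matrix ι ι ℝ) (c : ℝ) (x : ι → ℝ) :
    (c • x) ⬝ᵥ A *ᵥ (c • x) = c ^ 2 * (x ⬝ᵥ A *ᵥ x) := by
  simp only [mulVec_smul, dotProduct_smul, smul_dotProduct, smul_eq_mul]
  ring

lemma quad_sub_smul (A B : Matrix ι ι ℝ) (γ : ℝ) (x : ι → ℝ) :
    x ⬝ᵥ (A - γ • B) *ᵥ x = x ⬝ᵥ A *ᵥ x - γ * (x ⬝ᵥ B *ᵥ x) := by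
  rw [sub_mulVec, smul_mulVec, dotProduct_sub, dotProduct_smul, smul_eq_mul]

lemma continuous_quad (A : Matrix ι ι ℝ) : Continuous fun x : ι → ℝ => x ⬝ᵥ A *ᵥ x :=
  continuous_id.dotProduct (continuous_const.matrix_mulVec continuous_id)

lemma quad_nonneg_of_nonneg (hB : ∀ a b, 0 ≤ B a b) (hx : 0 ≤ x) : 0 ≤ x ⬝ᵥ B *ᵥ x :=
  Finset.sum_nonneg fun a _ =>
    mul_nonneg (hx a) (Finset.sum_nonneg fun b _ => mul_nonneg (hB a b) (hx b))

lemma mul_mul_le_quad (hB : ∀ a b, 0 ≤ B a b) (hx : 0 ≤ x) (a b : ι) :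
    x a * B a b * x b ≤ x ⬝ᵥ B *ᵥ x := by
  have hrow : B a b * x b ≤ (B *ᵥ x) a :=
    Finset.single_le_sum (f := fun c => B a c * x c) (fun c _ => mul_nonneg (hB a c) (hx c))
      (Finset.mem_univ b)
  calc x a * B a b * x b ≤ x a * (B *ᵥ x) a := by
        rw [mul_assoc]; exact mul_le_mul_of_nonneg_left hrow (hx a)
    _ ≤ x ⬝ᵥ B *ᵥ x :=
        Finset.single_le_sum (f := fun c => x c * (B *ᵥ x) c)
          (fun c _ => mul_nonneg (hx c) (Finset.sum_nonneg fun d _ => mul_nonneg (hB c d) (hx d)))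
          (Finset.mem_univ a)

end QuadraticForm

lemma exists_sub_smul_nonneg_apply_eq_zero {ι : Type*} [Fintype ι] {x v : ι → ℝ}
    (hx : 0 ≤ x) (hv : 0 ≤ v) (hv0 : v ≠ 0) :
    ∃ t : ℝ, 0 ≤ t ∧ 0 ≤ x - t • v ∧ ∃ m, v m ≠ 0 ∧ (x - t • v) m = 0 := by
  classical
  obtain ⟨m, hm, hmin⟩ := (Finset.univ.filter (v · ≠ 0)).exists_min_image (fun l => x l / v l)
    (by simpa [Finset.filter_nonempty_iff, funext_iff] using hv0)
  have hm0 : v m ≠ 0 := (Finset.mem_filter.1 hm).2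
  refine ⟨x m / v m, div_nonneg (hx m) (hv m), fun l => ?_, m, hm0, ?_⟩
  · by_cases hl : v l = 0
    · simpa [hl] using hx l
    · have hle := hmin l (by simpa using hl)
      rw [le_div_iff₀ ((hv l).lt_of_ne' hl)] at hle
      simpa using hle
  · simp [div_mul_cancel₀ _ hm0]

section Simplex

variable {ι : Type*} [Fintype ι]

def simplexOn (T : Finset ι) : Set (ι → ℝ) :=
  stdSimplex ℝ ι ∩ {x | ∀ l ∉ T, x l = 0}

lemma isCompact_simplexOn (T : Finset ι) : IsCompact (simplexOn T) := by
  refine (isCompact_stdSimplex ℝ ι).inter_right ?_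
  simp only [Set.ofPred_forall]
  exact isClosed_iInter fun l => isClosed_iInter fun _ =>
    isClosed_eq (continuous_apply l) continuous_const

lemma exists_smul_mem_simplexOn {T : Finset ι} {x : ι → ℝ} (hx : 0 ≤ x) (hx0 : x ≠ 0)
    (hxT : ∀ l ∉ T, x l = 0) : ∃ c : ℝ, 0 < c ∧ c • x ∈ simplexOn T := by
  have hsum : 0 < ∑ l, x l := by
    obtain ⟨l, hl⟩ := Function.ne_iff.1 hx0
    exact Finset.sum_pos' (fun l _ => hx l) ⟨l, Finset.mem_univ l, (hx l).lt_of_ne' hl⟩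
  refine ⟨(∑ l, x l)⁻¹, inv_pos.2 hsum, ⟨fun l => ?_, ?_⟩, fun l hl => by simp [hxT l hl]⟩
  · exact mul_nonneg (inv_nonneg.2 hsum.le) (hx l)
  · simp [← Finset.mul_sum, inv_mul_cancel₀ hsum.ne']

lemma Matrix.IsSymm.mulVec_apply_le_of_isMinOn [DecidableEq ι] {B : Matrix ι ι ℝ}
    (hB : B.IsSymm) {T : Finset ι} {x : ι → ℝ} (hx : x ∈ simplexOn T)
    (hmin : IsMinOn (fun y => y ⬝ᵥ B *ᵥ y) (simplexOn T) x) {l : ι} (hl : 0 < x l) :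
    (B *ᵥ x) l ≤ x ⬝ᵥ B *ᵥ x := by
  set z := x - Pi.single l 1
  have hlT : l ∈ T := by_contra fun h => hl.ne' (hx.2 l h)
  have hmem : ∀ t, 0 < t → t ≤ x l → x + t • z ∈ simplexOn T := by
    intro t ht htl
    refine ⟨⟨fun m => ?_, ?_⟩, fun m hm => ?_⟩
    · rcases eq_or_ne m l with rfl | hml
      · simp only [z, Pi.add_apply, Pi.smul_apply, Pi.sub_apply, Pi.single_eq_same, smul_eq_mul]
        nlinarith [hx.1.1 m]
      · simp only [z, Pi.add_apply, Pi.smul_apply, Pi.sub_apply, Pi.single_eq_of_ne hml,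
          smul_eq_mul, sub_zero]
        nlinarith [hx.1.1 m]
    · simp [z, Finset.sum_add_distrib, Finset.sum_sub_distrib, ← Finset.mul_sum, hx.1.2]
    · have hml : m ≠ l := fun h => hm (h ▸ hlT)
      simp [z, hx.2 m hm, hml]
  have hxz : x ⬝ᵥ B *ᵥ z = x ⬝ᵥ B *ᵥ x - (B *ᵥ x) l := by
    rw [mulVec_sub, dotProduct_sub, hB.dotProduct_mulVec_comm x (Pi.single l 1),
      single_one_dotProduct]
  have key : ∀ t, 0 < t → t ≤ x l →
      0 ≤ 2 * (x ⬝ᵥ B *ᵥ x - (B *ᵥ x) l) * t + z ⬝ᵥ B *ᵥ z * t ^ 2 := by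
    intro t ht htl
    have := isMinOn_iff.1 hmin _ (hmem t ht htl)
    rw [hB.quad_add_smul, hxz] at this
    linarith
  linarith [nonneg_of_forall_mul_add_mul_sq_nonneg hl key]

end Simplex

namespace Copositive

variable {n : ℕ} {A : Matrix (Fin n) (Fin n) ℝ} {u v : Fin n → ℝ}

lemma mulVec_nonneg (hA : Copositive A) (hu : 0 ≤ u) (huq : u ⬝ᵥ A *ᵥ u = 0) :
    ∀ l, 0 ≤ (A *ᵥ u) l := by
  intro l
  have key : ∀ t, 0 < t → t ≤ 1 → 0 ≤ 2 * (A *ᵥ u) l * t + A l l * t ^ 2 := by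
    intro t ht _
    have := hA.2 (u + Pi.single l t) (add_nonneg hu (Pi.single_nonneg.2 ht.le))
    rw [hA.1.quad_add_single, huq] at this
    linarith
  linarith [nonneg_of_forall_mul_add_mul_sq_nonneg one_pos key]

lemma mulVec_apply_eq_zero (hA : Copositive A) (hu : 0 ≤ u) (huq : u ⬝ᵥ A *ᵥ u = 0) {l : Fin n}
    (hl : u l ≠ 0) : (A *ᵥ u) l = 0 := by
  have key : ∀ t, 0 < t → t ≤ u l → 0 ≤ -2 * (A *ᵥ u) l * t + A l l * t ^ 2 := by
    intro t ht htl
    have hx : 0 ≤ u + Pi.single l (-t) := by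
      intro m
      rcases eq_or_ne m l with rfl | hml
      · simpa using htl
      · simpa [hml] using hu m
    have := hA.2 _ hx
    rw [hA.1.quad_add_single, huq] at this
    linarith
  linarith [nonneg_of_forall_mul_add_mul_sq_nonneg ((hu l).lt_of_ne' hl) key,
    hA.mulVec_nonneg hu huq l]

lemma dotProduct_mulVec_eq_zero (hA : Copositive A) (hu : 0 ≤ u) (huq : u ⬝ᵥ A *ᵥ u = 0)
    (hvu : Supp v ⊆ Supp u) : v ⬝ᵥ A *ᵥ u = 0 :=
  dotProduct_eq_zero_of_forall_ne_zero fun _ hl => hA.mulVec_apply_eq_zero hu huq (hvu hl)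

lemma quad_sub_smul_eq_zero (hA : Copositive A) (hu : 0 ≤ u) (huq : u ⬝ᵥ A *ᵥ u = 0)
    (hvq : v ⬝ᵥ A *ᵥ v = 0) (hvu : Supp v ⊆ Supp u) (t : ℝ) :
    (u - t • v) ⬝ᵥ A *ᵥ (u - t • v) = 0 := by
  rw [hA.1.quad_sub_smul_of_dotProduct_eq_zero _ hvq, huq]
  rw [hA.1.dotProduct_mulVec_comm, hA.dotProduct_mulVec_eq_zero hu huq hvu]

lemma mulVec_apply_eq_zero_of_supp_subset (hA : Copositive A) (hu : 0 ≤ u)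
    (huq : u ⬝ᵥ A *ᵥ u = 0) (hv : 0 ≤ v) (hvq : v ⬝ᵥ A *ᵥ v = 0) (hvu : Supp v ⊆ Supp u)
    {l : Fin n} (hl : (A *ᵥ u) l = 0) : (A *ᵥ v) l = 0 := by
  rcases eq_or_ne v 0 with rfl | hv0
  · simp
  obtain ⟨t, ht, hw, m, hm, hwm⟩ := exists_sub_smul_nonneg_apply_eq_zero hu hv hv0
  have htpos : 0 < t := ht.lt_of_ne <| by
    rintro rfl
    exact hvu hm (by simpa using hwm)
  have hAw := hA.mulVec_nonneg hw (hA.quad_sub_smul_eq_zero hu huq hvq hvu t) l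
  simp only [mulVec_sub, mulVec_smul, Pi.sub_apply, Pi.smul_apply, smul_eq_mul, hl] at hAw
  nlinarith [hA.mulVec_nonneg hv hvq l]

end Copositive

section Eij

variable {n : ℕ} {i j : Fin n} {x u : Fin n → ℝ}

lemma Eij_apply_nonneg (i j a b : Fin n) : 0 ≤ Eij i j a b := by
  unfold Eij; split_ifs <;> norm_num

lemma Eij_apply_le_one (i j a b : Fin n) : Eij i j a b ≤ 1 := by
  unfold Eij; split_ifs <;> norm_num

lemma Eij_isSymm (i j : Fin n) : (Eij i j).IsSymm := by
  ext a b
  simp only [transpose_apply, Eij]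
  congr 1
  exact propext (by tauto)

lemma Eij_ne_zero (i j : Fin n) : Eij i j ≠ 0 :=
  fun h => by simpa [Eij] using congrFun (congrFun h i) j

lemma Eij_mulVec_apply_le_sum (hx : 0 ≤ x) (l : Fin n) : (Eij i j *ᵥ x) l ≤ ∑ m, x m :=
  Finset.sum_le_sum (s := Finset.univ) fun m _ =>
    mul_le_of_le_one_left (hx m) (Eij_apply_le_one i j l m)

lemma Eij_mulVec_eq_zero (hi : u i = 0) (hj : u j = 0) : Eij i j *ᵥ u = 0 := by
  ext a
  simp only [mulVec, dotProduct, Pi.zero_apply]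
  refine Finset.sum_eq_zero fun b _ => ?_
  unfold Eij
  split_ifs with h
  · rcases h with ⟨-, rfl⟩ | ⟨-, rfl⟩ <;> simp [*]
  · simp

lemma quad_Eij_eq_zero (h : x i = 0 ∨ x j = 0) : x ⬝ᵥ Eij i j *ᵥ x = 0 := by
  simp only [dotProduct, mulVec, Finset.mul_sum]
  refine Finset.sum_eq_zero fun a _ => Finset.sum_eq_zero fun b _ => ?_
  unfold Eij
  split_ifs with hab
  · rcases hab with ⟨rfl, rfl⟩ | ⟨rfl, rfl⟩ <;> rcases h with h | h <;> simp [h]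
  · simp

lemma pos_of_quad_Eij_pos (hx : 0 ≤ x) (h : 0 < x ⬝ᵥ Eij i j *ᵥ x) : 0 < x i ∧ 0 < x j :=
  ⟨(hx i).lt_of_ne' fun hi => h.ne' (quad_Eij_eq_zero (.inl hi)),
    (hx j).lt_of_ne' fun hj => h.ne' (quad_Eij_eq_zero (.inr hj))⟩

lemma quad_Eij_le_one (hx : x ∈ stdSimplex ℝ (Fin n)) : x ⬝ᵥ Eij i j *ᵥ x ≤ 1 :=
  calc x ⬝ᵥ Eij i j *ᵥ x ≤ ∑ a, x a * 1 :=
        Finset.sum_le_sum fun a _ => mul_le_mul_of_nonneg_left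
          ((Eij_mulVec_apply_le_sum hx.1 a).trans hx.2.le) (hx.1 a)
    _ = 1 := by simpa using hx.2

end Eij

lemma not_copositive_sub_smul_of_zero {n : ℕ} {A B : Matrix (Fin n) (Fin n) ℝ} {u : Fin n → ℝ}
    {i j : Fin n} {γ : ℝ} (hA : A.IsSymm) (hu : 0 ≤ u) (huq : u ⬝ᵥ A *ᵥ u = 0)
    (hAj : (A *ᵥ u) j = 0) (hui : 0 < u i) (hB : ∀ a b, 0 ≤ B a b) (hBij : 0 < B i j)
    (hγ : 0 < γ) : ¬ Copositive (A - γ • B) := by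
  intro hc
  have key : ∀ t, 0 < t → t ≤ 1 → 0 ≤ -(γ * (u i * B i j)) * t + A j j * t ^ 2 := by
    intro t ht _
    set x := u + Pi.single j t
    have hsingle : (0 : Fin n → ℝ) ≤ Pi.single j t := Pi.single_nonneg.2 ht.le
    have hx : 0 ≤ x := add_nonneg hu hsingle
    have hxi : u i ≤ x i := le_add_of_nonneg_right (hsingle i)
    have hxj : t ≤ x j := by simpa [x] using hu j
    have hBx : u i * B i j * t ≤ x ⬝ᵥ B *ᵥ x :=
      (mul_le_mul (mul_le_mul_of_nonneg_right hxi hBij.le) hxj ht.le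
        (mul_nonneg (hx i) hBij.le)).trans (mul_mul_le_quad hB hx i j)
    have := hc.2 x hx
    rw [quad_sub_smul, hA.quad_add_single, huq, hAj] at this
    nlinarith
  have := nonneg_of_forall_mul_add_mul_sq_nonneg one_pos key
  nlinarith [mul_pos hγ (mul_pos hui hBij)]

lemma exists_isMinimalZeroOf {n : ℕ} {A : Matrix (Fin n) (Fin n) ℝ} {i j : Fin n}
    (hA : Copositive A)
    (h : ∃ u, IsZeroOf A u ∧ (A *ᵥ u) i = 0 ∧ (A *ᵥ u) j = 0 ∧ 0 < u i + u j) :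
    ∃ u, IsMinimalZeroOf A u ∧ (A *ᵥ u) i = 0 ∧ (A *ᵥ u) j = 0 ∧ 0 < u i + u j := by
  obtain ⟨u, ⟨⟨hu0, hu, huq⟩, hAi, hAj, hij⟩, hmin⟩ := exists_minimalFor_of_wellFoundedLT _ Supp h
  refine ⟨u, ⟨⟨hu0, hu, huq⟩, ?_⟩, hAi, hAj, hij⟩
  rintro ⟨v, ⟨hv0, hv, hvq⟩, hvu⟩
  have hAvi := hA.mulVec_apply_eq_zero_of_supp_subset hu huq hv hvq hvu.1 hAi
  have hAvj := hA.mulVec_apply_eq_zero_of_supp_subset hu huq hv hvq hvu.1 hAj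
  by_cases hvij : 0 < v i + v j
  · exact hvu.2 (hmin ⟨⟨hv0, hv, hvq⟩, hAvi, hAvj, hvij⟩ hvu.1)
  -- `v` vanishes at `i` and `j`, so `u - t • v` keeps `u i + u j` and loses a coordinate
  have hvi : v i = 0 := by linarith [hv i, hv j]
  have hvj : v j = 0 := by linarith [hv i, hv j]
  obtain ⟨t, -, hw, m, hm, hwm⟩ := exists_sub_smul_nonneg_apply_eq_zero hu hv hv0
  set w := u - t • v
  have hwij : 0 < w i + w j := by simpa [w, hvi, hvj] using hij
  have hwu : Supp w ⊆ Supp u := fun l hl hul => hl (by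
    have hvl : v l = 0 := by_contra fun h => hvu.1 h hul
    simp [w, hul, hvl])
  have hAw : ∀ l, (A *ᵥ u) l = 0 → (A *ᵥ v) l = 0 → (A *ᵥ w) l = 0 := fun l h1 h2 => by
    simp [w, mulVec_sub, mulVec_smul, h1, h2]
  refine (hmin ⟨⟨?_, hw, hA.quad_sub_smul_eq_zero hu huq hvq hvu.1 t⟩, hAw i hAi hAvi,
    hAw j hAj hAvj, hwij⟩ hwu) (hvu.1 hm) hwm
  rintro hw0
  simp [hw0] at hwij

section Limit

variable {n : ℕ} {A : Matrix (Fin n) (Fin n) ℝ} {ι : Type*} {l : Filter ι} {γ : ι → ℝ}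
  {x : ι → Fin n → ℝ} {u : Fin n → ℝ}

lemma Copositive.quad_eq_zero_of_tendsto [l.NeBot] (hA : Copositive A) (hγ : Tendsto γ l (𝓝 0))
    (hxu : Tendsto x l (𝓝 u)) (hu : 0 ≤ u) (hxq : ∀ k, x k ⬝ᵥ A *ᵥ x k ≤ γ k) :
    u ⬝ᵥ A *ᵥ u = 0 :=
  le_antisymm (le_of_tendsto_of_tendsto' (((continuous_quad A).tendsto u).comp hxu) hγ hxq)
    (hA.2 u hu)

lemma Copositive.eventually_mulVec_apply_eq_zero_of_tendsto (hA : Copositive A) (hu : 0 ≤ u)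
    (huq : u ⬝ᵥ A *ᵥ u = 0) (hγ : Tendsto γ l (𝓝 0)) (hxu : Tendsto x l (𝓝 u))
    (hxA : ∀ k m, 0 < x k m → (A *ᵥ x k) m < γ k) :
    ∀ᶠ k in l, ∀ m, 0 < x k m → (A *ᵥ u) m = 0 := by
  refine eventually_all.2 fun m => ?_
  rcases (hA.mulVec_nonneg hu huq m).eq_or_lt with h | h
  · exact Eventually.of_forall fun _ _ => h.symm
  have hcont : Continuous fun y : Fin n → ℝ => (A *ᵥ y) m :=
    (continuous_apply m).comp (continuous_const.matrix_mulVec continuous_id)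
  have hlim : Tendsto (fun k => (A *ᵥ x k) m - γ k) l (𝓝 ((A *ᵥ u) m - 0)) :=
    ((hcont.tendsto u).comp hxu).sub hγ
  filter_upwards [hlim.eventually (lt_mem_nhds (by simpa using h))] with k hk hxm
  linarith [hxA k m hxm]

end Limit

section Reduction

variable {n : ℕ} {A : Matrix (Fin n) (Fin n) ℝ} {i j : Fin n} {T : Finset (Fin n)}

def IrreducibleWrtEijOn (A : Matrix (Fin n) (Fin n) ℝ) (i j : Fin n) (T : Finset (Fin n)) :
    Prop :=
  ∀ γ : ℝ, 0 < γ → ∃ x, 0 ≤ x ∧ (∀ l ∉ T, x l = 0) ∧ x ⬝ᵥ A *ᵥ x < γ * (x ⬝ᵥ Eij i j *ᵥ x)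

lemma irreducibleWrtEijOn_univ (hA : Copositive A) (h : IrreducibleWrtMat A (Eij i j)) :
    IrreducibleWrtEijOn A i j Finset.univ := by
  intro γ hγ
  by_contra! hneg
  refine h ⟨γ, hγ, hA.1.sub ((Eij_isSymm i j).smul γ), fun x hx => ?_⟩
  rw [quad_sub_smul]
  linarith [hneg x hx (by simp)]

lemma irreducibleWrtEijOn_of_frequently {ι : Type*} {l : Filter ι} {γ : ι → ℝ}
    (hγ : Tendsto γ l (𝓝 0))
    (h : ∃ᶠ k in l, ∃ y, 0 ≤ y ∧ (∀ m ∉ T, y m = 0) ∧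
      y ⬝ᵥ A *ᵥ y < γ k * (y ⬝ᵥ Eij i j *ᵥ y)) :
    IrreducibleWrtEijOn A i j T := by
  intro γ' hγ'
  obtain ⟨k, ⟨y, hy, hyT, hyq⟩, hk⟩ :=
    (h.and_eventually (hγ.eventually (eventually_le_nhds hγ'))).exists
  exact ⟨y, hy, hyT, hyq.trans_le
    (mul_le_mul_of_nonneg_right hk (quad_nonneg_of_nonneg (Eij_apply_nonneg i j) hy))⟩

lemma IrreducibleWrtEijOn.exists_mem_simplexOn_forall_mulVec_lt (hA : Copositive A)
    (hT : IrreducibleWrtEijOn A i j T) {γ : ℝ} (hγ : 0 < γ) : ∃ x ∈ simplexOn T,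
      x ⬝ᵥ A *ᵥ x < γ * (x ⬝ᵥ Eij i j *ᵥ x) ∧ ∀ m, 0 < x m → (A *ᵥ x) m < γ := by
  obtain ⟨y, hy, hyT, hyq⟩ := hT γ hγ
  have hy0 : y ≠ 0 := by rintro rfl; simp at hyq
  obtain ⟨c, hc, hcy⟩ := exists_smul_mem_simplexOn hy hy0 hyT
  have hf := quad_sub_smul A (Eij i j) γ
  obtain ⟨x, hx, hmin⟩ := (isCompact_simplexOn T).exists_isMinOn ⟨_, hcy⟩
    (continuous_quad _).continuousOn
  have hxneg : x ⬝ᵥ (A - γ • Eij i j) *ᵥ x < 0 := by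
    refine (isMinOn_iff.1 hmin _ hcy).trans_lt ?_
    rw [quad_smul, hf]
    exact mul_neg_of_pos_of_neg (by positivity) (by linarith)
  refine ⟨x, hx, by linarith [hf x], fun m hm => ?_⟩
  have hfo := ((hA.1.sub ((Eij_isSymm i j).smul γ)).mulVec_apply_le_of_isMinOn hx hmin
    hm).trans_lt hxneg
  have hEx : (Eij i j *ᵥ x) m ≤ 1 := (Eij_mulVec_apply_le_sum hx.1.1 m).trans hx.1.2.le
  rw [sub_mulVec, smul_mulVec, Pi.sub_apply, Pi.smul_apply, smul_eq_mul] at hfo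
  nlinarith [mul_le_mul_of_nonneg_left hEx hγ.le]

lemma exists_quad_eq_supported_on_erase (hA : A.IsSymm) {u x : Fin n → ℝ} (hu : 0 ≤ u)
    (hu0 : u ≠ 0) (huT : ∀ l ∉ T, u l = 0) (huq : u ⬝ᵥ A *ᵥ u = 0) (hui : u i = 0) (huj : u j = 0)
    (hx : 0 ≤ x) (hxT : ∀ l ∉ T, x l = 0) (hxu : ∀ m, 0 < x m → (A *ᵥ u) m = 0) :
    ∃ m ∈ T, ∃ y, 0 ≤ y ∧ (∀ l ∉ T.erase m, y l = 0) ∧ y ⬝ᵥ A *ᵥ y = x ⬝ᵥ A *ᵥ x ∧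
      y ⬝ᵥ Eij i j *ᵥ y = x ⬝ᵥ Eij i j *ᵥ x := by
  obtain ⟨t, -, hy, m, hm, hym⟩ := exists_sub_smul_nonneg_apply_eq_zero hx hu hu0
  have hEu : Eij i j *ᵥ u = 0 := Eij_mulVec_eq_zero hui huj
  refine ⟨m, by_contra fun h => hm (huT m h), x - t • u, hy, fun l hl => ?_,
    hA.quad_sub_smul_of_dotProduct_eq_zero ?_ huq t,
    (Eij_isSymm i j).quad_sub_smul_of_dotProduct_eq_zero (by simp [hEu]) (by simp [hEu]) t⟩
  · rcases eq_or_ne l m with rfl | hlm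
    · exact hym
    · have hlT : l ∉ T := fun h => hl (Finset.mem_erase.2 ⟨hlm, h⟩)
      simp [hxT l hlT, huT l hlT]
  · exact dotProduct_eq_zero_of_forall_ne_zero fun l hl => hxu l ((hx l).lt_of_ne' hl)

lemma IrreducibleWrtEijOn.exists_zero_or_erase (hA : Copositive A)
    (hT : IrreducibleWrtEijOn A i j T) :
    (∃ u, IsZeroOf A u ∧ (A *ᵥ u) i = 0 ∧ (A *ᵥ u) j = 0 ∧ 0 < u i + u j) ∨
      ∃ m ∈ T, IrreducibleWrtEijOn A i j (T.erase m) := by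
  choose x hxT hxq hxA using fun k : ℕ =>
    hT.exists_mem_simplexOn_forall_mulVec_lt hA (Nat.one_div_pos_of_nat (n := k))
  obtain ⟨u, hu, φ, hφ, hxu⟩ := (isCompact_simplexOn T).tendsto_subseq hxT
  set γ : ℕ → ℝ := fun k => 1 / ((φ k : ℝ) + 1)
  have hγ : Tendsto γ atTop (𝓝 0) :=
    tendsto_one_div_add_atTop_nhds_zero_nat.comp hφ.tendsto_atTop
  have huq : u ⬝ᵥ A *ᵥ u = 0 := hA.quad_eq_zero_of_tendsto hγ hxu hu.1.1 fun k =>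
    (hxq (φ k)).le.trans (mul_le_of_le_one_right (by positivity) (quad_Eij_le_one (hxT _).1))
  have hsupp := hA.eventually_mulVec_apply_eq_zero_of_tendsto hu.1.1 huq hγ hxu fun k => hxA (φ k)
  have hxij : ∀ k, 0 < x k i ∧ 0 < x k j := fun k => pos_of_quad_Eij_pos (hxT k).1.1
    (pos_of_mul_pos_right ((hA.2 _ (hxT k).1.1).trans_lt (hxq k)) Nat.one_div_pos_of_nat.le)
  obtain ⟨k, hk⟩ := hsupp.exists
  have hu0 : u ≠ 0 := by rintro rfl; simpa using hu.1.2
  by_cases hij : 0 < u i + u j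
  · exact .inl ⟨u, ⟨hu0, hu.1.1, huq⟩, hk i (hxij _).1, hk j (hxij _).2, hij⟩
  have hui : u i = 0 := by linarith [hu.1.1 i, hu.1.1 j]
  have huj : u j = 0 := by linarith [hu.1.1 i, hu.1.1 j]
  have hred : ∀ᶠ k in atTop, ∃ m ∈ T, ∃ y, 0 ≤ y ∧ (∀ l ∉ T.erase m, y l = 0) ∧
      y ⬝ᵥ A *ᵥ y < γ k * (y ⬝ᵥ Eij i j *ᵥ y) := hsupp.mono fun k hk => by
    obtain ⟨m, hm, y, hy, hyT, hyA, hyE⟩ :=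
      exists_quad_eq_supported_on_erase hA.1 hu.1.1 hu0 hu.2 huq hui huj (hxT _).1.1 (hxT _).2 hk
    exact ⟨m, hm, y, hy, hyT, by rw [hyA, hyE]; exact hxq _⟩
  obtain ⟨m, hm, hfreq⟩ := (Finset.frequently_exists T).1 hred.frequently
  exact .inr ⟨m, hm, irreducibleWrtEijOn_of_frequently hγ hfreq⟩

lemma IrreducibleWrtEijOn.exists_zero (hA : Copositive A) (hT : IrreducibleWrtEijOn A i j T) :
    ∃ u, IsZeroOf A u ∧ (A *ᵥ u) i = 0 ∧ (A *ᵥ u) j = 0 ∧ 0 < u i + u j := by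
  obtain ⟨S, hS⟩ := exists_minimal_of_wellFoundedLT _ ⟨T, hT⟩
  rcases hS.prop.exists_zero_or_erase hA with h | ⟨m, hm, hSm⟩
  · exact h
  · exact (hS.not_prop_of_lt (Finset.erase_ssubset hm) hSm).elim

end Reduction

theorem stmt14 {n : ℕ} (A : Matrix (Fin n) (Fin n) ℝ) (hA : Copositive A) :
    IrreducibleWrtSet A {B : Matrix (Fin n) (Fin n) ℝ | B.IsSymm ∧ ∀ i j, 0 ≤ B i j} ↔
      ∀ i j : Fin n, ∃ u, IsMinimalZeroOf A u ∧
        A.mulVec u i = 0 ∧ A.mulVec u j = 0 ∧ 0 < u i + u j := by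
  constructor
  · intro h i j
    have hE : IrreducibleWrtMat A (Eij i j) := fun ⟨γ, hγ, hc⟩ =>
      h ⟨γ, hγ, Eij i j, ⟨Eij_isSymm i j, Eij_apply_nonneg i j⟩, Eij_ne_zero i j, hc⟩
    exact exists_isMinimalZeroOf hA ((irreducibleWrtEijOn_univ hA hE).exists_zero hA)
  · rintro h ⟨γ, hγ, B, ⟨hBs, hB⟩, hB0, hc⟩
    obtain ⟨i, j, hij⟩ : ∃ i j, B i j ≠ 0 := by
      by_contra! h0
      exact hB0 (Matrix.ext h0)
    obtain ⟨u, ⟨⟨-, hu, huq⟩, -⟩, hAi, hAj, hpos⟩ := h i j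
    rcases (hu i).lt_or_eq with hui | hui
    · exact not_copositive_sub_smul_of_zero hA.1 hu huq hAj hui hB ((hB i j).lt_of_ne' hij) hγ hc
    · refine not_copositive_sub_smul_of_zero hA.1 hu huq hAi (by linarith) hB ?_ hγ hc
      rw [hBs.apply]
      exact (hB i j).lt_of_ne' hij
end
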